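/- arXiv:2511.02157 — 2 statements merged into one kernel-verified Lean document; each statement's English description precedes it below -/
import Mathlib

section
/- Let d ≥ 2, β ≥ 70, α̃ := 2 + 2·log d + β·log² d, and define on Ω := {y ∈ ℝ^d : y_k > 0 ∀k, Σ_k y_k ≤ 1} the regularizer ψ(y) := −α̃·log(Σ_k y_k) + (1/Σ_k y_k)·Σ_k y_k·log y_k, with Bregman divergence D_ψ(z‖y) := ψ(z) − ψ(y) − ⟨∇ψ(y), z − y⟩. Let T ≥ 1, let u^{(0)} := 0 and u^{(1)},…,u^{(T)} ∈ ℝ^d, set U^{(t)} := Σ_{τ=1}^{t−1} u^{(τ)}, let κ^{(t)} > 0 be scalars, and let η_1 ≥ η_2 ≥ … ≥ η_{T+1} be positive step sizes. Define F_t(y) := −η_t·⟨U^{(t)} + κ^{(t)}·u^{(t−1)}, y⟩ + ψ(y) and G_t(z) := −η_t·⟨U^{(t)}, z⟩ + ψ(z), and suppose y^{(t)} minimizes F_t over Ω and z^{(t)} minimizes G_t over Ω for each t ∈ {1,…,T+1}. Then for every y ∈ Ω: Σ_{t=1}^T ⟨y − y^{(t)}, u^{(t)}⟩ ≤ ψ(y)/η_{T+1}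 − ψ(y^{(1)})/η_1 + Σ_{t=1}^T ⟨z^{(t+1)} − y^{(t)}, u^{(t)} − κ^{(t)}·u^{(t−1)}⟩ − Σ_{t=1}^T (1/η_t)·[D_ψ(y^{(t)}‖z^{(t)}) + D_ψ(z^{(t+1)}‖y^{(t)})] + Σ_{t=1}^T (1/η_t − 1/η_{t+1})·ψ(z^{(t+1)}). -/
/-!
If `p` minimizes `⟨c, ·⟩ + ψ` over the convex set `Ω`, differentiating along the segment from `p`
to any `w ∈ Ω` gives `⟨c + ∇ψ(p), w - p⟩ ≥ 0`, which is exactly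
`⟨c, p⟩ + ψ(p) + D_ψ(w‖p) ≤ ⟨c, w⟩ + ψ(w)`; no convexity of `ψ` is needed. Applying this to
`y⁽ᵗ⁾` (tested at `z⁽ᵗ⁺¹⁾`) and to `z⁽ᵗ⁾` (tested at `y⁽ᵗ⁾`) bounds the decrease of the potential
`Φ_t = G_t(z⁽ᵗ⁾)/η_t` by the `t`-th summand of the right-hand side plus `⟨y⁽ᵗ⁾, u⁽ᵗ⁾⟩`.
Telescoping, and comparing `z⁽ᵀ⁺¹⁾` with `y` in `G_{T+1}` and `y⁽¹⁾` with `z⁽¹⁾` in `F_1 = ψ`,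
gives the bound.
-/

/-- The (strictly positive) lifted simplex `Ω = {y : y_k > 0 ∀k, Σ_k y_k ≤ 1}`. -/
def liftedSimplex (d : ℕ) : Set (Fin d → ℝ) :=
  {y | (∀ k, 0 < y k) ∧ (∑ k, y k) ≤ 1}

/-- Total mass `Λ(y) = Σ_k y_k`. -/
noncomputable def lmass {d : ℕ} (y : Fin d → ℝ) : ℝ := ∑ k, y k

/-- The lifted regularizer `ψ(y) = −α̃ log Λ(y) + (1/Λ(y)) Σ_k y_k log y_k`. -/
noncomputable def psiReg {d : ℕ} (αt : ℝ) (y : Fin d → ℝ) : ℝ :=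
  -αt * Real.log (lmass y) + (1 / lmass y) * ∑ k, y k * Real.log (y k)

/-- The gradient of `ψ` on the (strictly positive) lifted simplex. -/
noncomputable def gradPsi {d : ℕ} (αt : ℝ) (y : Fin d → ℝ) (i : Fin d) : ℝ :=
  -(αt - 1) / lmass y
    - (1 / lmass y) * ∑ k, (y k / lmass y) * Real.log (y k / lmass y)
    + Real.log (y i / lmass y) / lmass y

/-- Bregman divergence `D_ψ(z‖y) = ψ(z) − ψ(y) − ⟨∇ψ(y), z − y⟩`. -/
noncomputable def DPsi {d : ℕ} (αt : ℝ) (z y : Fin d → ℝ) : ℝ :=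
  psiReg αt z - psiReg αt y - ∑ i, gradPsi αt y i * (z i - y i)

open Real

theorem IsMinOn.hasDerivAt_segment_nonneg {E : Type*} [AddCommGroup E] [Module ℝ E]
    {f : E → ℝ} {s : Set E} (hs : Convex ℝ s) {p w : E} (hmin : IsMinOn f s p)
    (hp : p ∈ s) (hw : w ∈ s) {f' : ℝ}
    (hf : HasDerivAt (fun t : ℝ => f (p + t • (w - p))) f' 0) : 0 ≤ f' := by
  have hseg : IsMinOn (fun t : ℝ => f (p + t • (w - p))) (Set.Icc 0 1) 0 := by
    refine isMinOn_iff.2 fun t ht => ?_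
    simpa only [zero_smul, add_zero] using isMinOn_iff.1 hmin _ (hs.add_smul_sub_mem hp hw ht)
  have hone : (1 : ℝ) ∈ posTangentConeAt (Set.Icc 0 1) 0 :=
    mem_posTangentConeAt_of_segment_subset (by simp [segment_eq_Icc])
  simpa using hseg.localize.hasFDerivWithinAt_nonneg hf.hasFDerivAt.hasFDerivWithinAt hone

theorem convex_liftedSimplex (d : ℕ) : Convex ℝ (liftedSimplex d) := by
  intro x hx y hy a b ha hb hab
  refine ⟨fun k => (convex_Ioi (0 : ℝ)) (hx.1 k) (hy.1 k) ha hb hab, ?_⟩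
  simpa [Finset.sum_add_distrib, ← Finset.mul_sum] using (convex_Iic (1 : ℝ)) hx.2 hy.2 ha hb hab

theorem lmass_pos_of_mem_liftedSimplex {d : ℕ} (hd : 0 < d) {p : Fin d → ℝ}
    (hp : p ∈ liftedSimplex d) : 0 < lmass p :=
  Finset.sum_pos (fun k _ => hp.1 k) ⟨⟨0, hd⟩, Finset.mem_univ _⟩

section Gradient

variable {d : ℕ} (αt : ℝ) {p : Fin d → ℝ}

theorem gradPsi_eq (hp : ∀ k, p k ≠ 0) (hΛ : lmass p ≠ 0) (i : Fin d) :
    gradPsi αt p i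
      = (1 - αt + log (p i)) / lmass p - (∑ k, p k * log (p k)) / lmass p ^ 2 := by
  have hent : ∑ k, p k / lmass p * log (p k / lmass p)
      = (∑ k, p k * log (p k)) / lmass p - log (lmass p) := by
    simp only [log_div (hp _) hΛ, mul_sub, Finset.sum_sub_distrib, ← Finset.sum_div,
      div_mul_eq_mul_div, ← Finset.sum_mul]
    rw [show ∑ k, p k = lmass p from rfl, mul_div_cancel_left₀ _ hΛ]
  rw [gradPsi, hent, log_div (hp i) hΛ]
  field_simp
  ring

theorem hasDerivAt_psiReg_line (hp : ∀ k, p k ≠ 0) (hΛ : lmass p ≠ 0) (v : Fin d → ℝ) :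
    HasDerivAt (fun t : ℝ => psiReg αt (p + t • v)) (∑ i, gradPsi αt p i * v i) 0 := by
  have hline : ∀ k, HasDerivAt (fun t : ℝ => (p + t • v) k) (v k) 0 := fun k => by
    simpa using ((hasDerivAt_id (0 : ℝ)).mul_const (v k)).const_add (p k)
  have hmass : HasDerivAt (fun t : ℝ => lmass (p + t • v)) (∑ k, v k) 0 :=
    HasDerivAt.fun_sum fun k _ => hline k
  have hΛ0 : lmass (p + (0 : ℝ) • v) ≠ 0 := by simpa using hΛ
  have hent : HasDerivAt (fun t : ℝ => ∑ k, (p + t • v) k * log ((p + t • v) k))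
      (∑ k, v k * (log (p k) + 1)) 0 := by
    refine HasDerivAt.fun_sum fun k _ => ?_
    refine ((hline k).mul ((hline k).log (by simpa using hp k))).congr_deriv ?_
    simp only [zero_smul, add_zero]
    field_simp [hp k]
  have hpsi : (fun t : ℝ => psiReg αt (p + t • v)) = fun t => -αt * log (lmass (p + t • v))
      + (∑ k, (p + t • v) k * log ((p + t • v) k)) / lmass (p + t • v) := by
    ext t
    simp only [psiReg, one_div_mul_eq_div]
  rw [hpsi]
  refine (((hmass.log hΛ0).const_mul (-αt)).add (hent.div hmass hΛ0)).congr_deriv ?_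
  have hlin : ∑ i, (1 - αt + log (p i)) * v i = ∑ k, v k * (log (p k) + 1) - αt * ∑ k, v k := by
    rw [Finset.mul_sum, ← Finset.sum_sub_distrib]
    exact Finset.sum_congr rfl fun i _ => by ring
  simp only [zero_smul, add_zero, gradPsi_eq αt hp hΛ, sub_mul, div_mul_eq_mul_div,
    Finset.sum_sub_distrib, ← Finset.sum_div, ← Finset.mul_sum, hlin]
  field_simp
  ring

end Gradient

section Regret

variable {ι : Type*} [Fintype ι]

def HasBregmanMinBound (S : Set (ι → ℝ)) (R : (ι → ℝ) → ℝ) (D : (ι → ℝ) → (ι → ℝ) → ℝ) :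
    Prop :=
  ∀ c p, p ∈ S → IsMinOn (fun w => c ⬝ᵥ w + R w) S p →
    ∀ w ∈ S, c ⬝ᵥ p + R p + D w p ≤ c ⬝ᵥ w + R w

theorem hasBregmanMinBound_psiReg {d : ℕ} (hd : 0 < d) (αt : ℝ) :
    HasBregmanMinBound (liftedSimplex d) (psiReg αt) (DPsi αt) := by
  intro c p hp hmin w hw
  have hlin : HasDerivAt (fun t : ℝ => c ⬝ᵥ (p + t • (w - p))) (c ⬝ᵥ (w - p)) 0 := by
    simp only [dotProduct_add, dotProduct_smul, smul_eq_mul]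
    simpa using ((hasDerivAt_id (0 : ℝ)).mul_const (c ⬝ᵥ (w - p))).const_add (c ⬝ᵥ p)
  have hψ := hasDerivAt_psiReg_line αt (fun k => (hp.1 k).ne')
    (lmass_pos_of_mem_liftedSimplex hd hp).ne' (w - p)
  have hslope := hmin.hasDerivAt_segment_nonneg (convex_liftedSimplex d) hp hw (hlin.add hψ)
  rw [dotProduct_sub] at hslope
  simp only [DPsi, Pi.sub_apply] at hslope ⊢
  linarith

-- With `U = U⁽ᵗ⁾`, `m = u⁽ᵗ⁻¹⁾`, `g = u⁽ᵗ⁾` and `z' = z⁽ᵗ⁺¹⁾`, the left side is `Φ_t - Φ_{t+1}`.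
theorem oftrl_potential_step (R : (ι → ℝ) → ℝ) (D : (ι → ℝ) → (ι → ℝ) → ℝ) {η η' κ : ℝ}
    (hη : 0 < η) {U m g y z z' : ι → ℝ}
    (hy : (-η • (U + κ • m)) ⬝ᵥ y + R y + D z' y ≤ (-η • (U + κ • m)) ⬝ᵥ z' + R z')
    (hz : (-η • U) ⬝ᵥ z + R z + D y z ≤ (-η • U) ⬝ᵥ y + R y) :
    (-(U ⬝ᵥ z) + R z / η) - (-((U + g) ⬝ᵥ z') + R z' / η')
      ≤ (z' - y) ⬝ᵥ (g - κ • m) + y ⬝ᵥ g - 1 / η * (D y z + D z' y)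
        + (1 / η - 1 / η') * R z' := by
  simp only [smul_dotProduct, add_dotProduct, dotProduct_sub, dotProduct_smul,
    smul_eq_mul, dotProduct_comm _ g, dotProduct_comm _ m] at hy hz ⊢
  have hdiv : R z / η + D y z / η + D z' y / η - R z' / η
      ≤ U ⬝ᵥ z - U ⬝ᵥ z' - κ * (m ⬝ᵥ z') + κ * (m ⬝ᵥ y) := by
    rw [← add_div, ← add_div, ← sub_div, div_le_iff₀ hη]
    linarith
  rw [sub_mul, one_div_mul_eq_div, one_div_mul_eq_div, one_div_mul_eq_div, add_div]
  linarith

theorem HasBregmanMinBound.oftrl_regret_le {S : Set (ι → ℝ)} {R : (ι → ℝ) → ℝ}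
    {D : (ι → ℝ) → (ι → ℝ) → ℝ} (hR : HasBregmanMinBound S R D)
    (T : ℕ) (u : ℕ → ι → ℝ) (hu0 : u 0 = 0)
    (U : ℕ → ι → ℝ) (hU : ∀ t, U t = ∑ τ ∈ Finset.Ico 1 t, u τ)
    (κ η : ℕ → ℝ) (hηpos : ∀ t ∈ Finset.Icc 1 (T + 1), 0 < η t) (y z : ℕ → ι → ℝ)
    (hyS : ∀ t ∈ Finset.Icc 1 (T + 1), y t ∈ S) (hzS : ∀ t ∈ Finset.Icc 1 (T + 1), z t ∈ S)
    (hymin : ∀ t ∈ Finset.Icc 1 (T + 1),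
      IsMinOn (fun w => -η t * ((U t + κ t • u (t - 1)) ⬝ᵥ w) + R w) S (y t))
    (hzmin : ∀ t ∈ Finset.Icc 1 (T + 1), IsMinOn (fun w => -η t * (U t ⬝ᵥ w) + R w) S (z t))
    {yc : ι → ℝ} (hyc : yc ∈ S) :
    ∑ t ∈ Finset.Icc 1 T, (yc - y t) ⬝ᵥ u t ≤
      R yc / η (T + 1) - R (y 1) / η 1
      + ∑ t ∈ Finset.Icc 1 T, (z (t + 1) - y t) ⬝ᵥ (u t - κ t • u (t - 1))
      - ∑ t ∈ Finset.Icc 1 T, 1 / η t * (D (y t) (z t) + D (z (t + 1)) (y t))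
      + ∑ t ∈ Finset.Icc 1 T, (1 / η t - 1 / η (t + 1)) * R (z (t + 1)) := by
  have hmem : ∀ t ∈ Finset.Icc 1 T, t ∈ Finset.Icc 1 (T + 1) ∧ t + 1 ∈ Finset.Icc 1 (T + 1) :=
    fun t ht => by simp only [Finset.mem_Icc] at ht ⊢; omega
  have hlast : T + 1 ∈ Finset.Icc 1 (T + 1) := by simp
  have hfirst : 1 ∈ Finset.Icc 1 (T + 1) := by simp
  have hU1 : U 1 = 0 := by simp [hU]
  have hUsucc : ∀ t ∈ Finset.Icc 1 T, U (t + 1) = U t + u t := fun t ht => by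
    rw [hU, hU, Finset.sum_Ico_succ_top (Finset.mem_Icc.1 ht).1]
  have hyB : ∀ t ∈ Finset.Icc 1 (T + 1), ∀ w ∈ S,
      (-η t • (U t + κ t • u (t - 1))) ⬝ᵥ y t + R (y t) + D w (y t)
        ≤ (-η t • (U t + κ t • u (t - 1))) ⬝ᵥ w + R w := fun t ht =>
    hR _ _ (hyS t ht) (by simpa only [smul_dotProduct, smul_eq_mul] using hymin t ht)
  have hzB : ∀ t ∈ Finset.Icc 1 (T + 1), ∀ w ∈ S,
      (-η t • U t) ⬝ᵥ z t + R (z t) + D w (z t) ≤ (-η t • U t) ⬝ᵥ w + R w := fun t ht =>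
    hR _ _ (hzS t ht) (by simpa only [smul_dotProduct, smul_eq_mul] using hzmin t ht)
  set Φ : ℕ → ℝ := fun t => -(U t ⬝ᵥ z t) + R (z t) / η t with hΦ
  have hstep : ∀ t ∈ Finset.Icc 1 T, Φ t - Φ (t + 1)
      ≤ (z (t + 1) - y t) ⬝ᵥ (u t - κ t • u (t - 1)) + y t ⬝ᵥ u t
        - 1 / η t * (D (y t) (z t) + D (z (t + 1)) (y t))
        + (1 / η t - 1 / η (t + 1)) * R (z (t + 1)) := fun t ht => by
    obtain ⟨h1, h2⟩ := hmem t ht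
    simp only [hΦ, hUsucc t ht]
    exact oftrl_potential_step R D (hηpos t h1) (hyB t h1 _ (hzS _ h2)) (hzB t h1 _ (hyS t h1))
  have htelescope : ∑ t ∈ Finset.Icc 1 T, (Φ t - Φ (t + 1)) = Φ 1 - Φ (T + 1) := by
    rw [← Finset.Ico_add_one_right_eq_Icc, ← neg_sub, ← Finset.sum_Ico_sub Φ (by omega),
      ← Finset.sum_neg_distrib]
    simp only [neg_sub]
  have hstart : R (y 1) / η 1 ≤ Φ 1 := by
    have h := isMinOn_iff.1 (hymin 1 hfirst) (z 1) (hzS 1 hfirst)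
    simp only [hU1, hu0, Nat.sub_self, smul_zero, add_zero, zero_dotProduct, mul_zero,
      zero_add] at h
    simpa [hΦ, hU1] using div_le_div_of_nonneg_right h (hηpos 1 hfirst).le
  have hend : U (T + 1) ⬝ᵥ yc ≤ R yc / η (T + 1) - Φ (T + 1) := by
    have h := isMinOn_iff.1 (hzmin (T + 1) hlast) yc hyc
    have h' : U (T + 1) ⬝ᵥ yc - U (T + 1) ⬝ᵥ z (T + 1) ≤ (R yc - R (z (T + 1))) / η (T + 1) := by
      rw [le_div_iff₀ (hηpos _ hlast)]
      linarith
    rw [sub_div] at h'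
    simp only [hΦ]
    linarith
  have hregret : ∑ t ∈ Finset.Icc 1 T, (yc - y t) ⬝ᵥ u t
      = U (T + 1) ⬝ᵥ yc - ∑ t ∈ Finset.Icc 1 T, y t ⬝ᵥ u t := by
    rw [hU, Finset.Ico_add_one_right_eq_Icc, sum_dotProduct]
    simp only [sub_dotProduct, Finset.sum_sub_distrib, dotProduct_comm yc]
  have hsum := Finset.sum_le_sum hstep
  simp only [htelescope, Finset.sum_add_distrib, Finset.sum_sub_distrib] at hsum
  linarith

end Regret

theorem oftrl_one_step_inequality_general (d : ℕ) (hd : 2 ≤ d)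
    (αt : ℝ)
    (T : ℕ)
    (u : ℕ → Fin d → ℝ) (hu0 : u 0 = 0)
    (U : ℕ → Fin d → ℝ) (hU : ∀ t, U t = ∑ τ ∈ Finset.Ico 1 t, u τ)
    (κ : ℕ → ℝ)
    (η : ℕ → ℝ) (hηpos : ∀ t ∈ Finset.Icc 1 (T + 1), 0 < η t)
    (F G : ℕ → (Fin d → ℝ) → ℝ)
    (hF : ∀ t yy, F t yy =
      -η t * (∑ i, (U t i + κ t * u (t - 1) i) * yy i) + psiReg αt yy)
    (hG : ∀ t zz, G t zz = -η t * (∑ i, U t i * zz i) + psiReg αt zz)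
    (y z : ℕ → Fin d → ℝ)
    (hyΩ : ∀ t ∈ Finset.Icc 1 (T + 1), y t ∈ liftedSimplex d)
    (hzΩ : ∀ t ∈ Finset.Icc 1 (T + 1), z t ∈ liftedSimplex d)
    (hymin : ∀ t ∈ Finset.Icc 1 (T + 1), ∀ y' ∈ liftedSimplex d, F t (y t) ≤ F t y')
    (hzmin : ∀ t ∈ Finset.Icc 1 (T + 1), ∀ z' ∈ liftedSimplex d, G t (z t) ≤ G t z') :
    ∀ yc ∈ liftedSimplex d,
      (∑ t ∈ Finset.Icc 1 T, ∑ i, (yc i - y t i) * u t i) ≤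
        psiReg αt yc / η (T + 1) - psiReg αt (y 1) / η 1
        + (∑ t ∈ Finset.Icc 1 T,
            ∑ i, (z (t + 1) i - y t i) * (u t i - κ t * u (t - 1) i))
        - (∑ t ∈ Finset.Icc 1 T,
            (1 / η t) * (DPsi αt (y t) (z t) + DPsi αt (z (t + 1)) (y t)))
        + (∑ t ∈ Finset.Icc 1 T,
            (1 / η t - 1 / η (t + 1)) * psiReg αt (z (t + 1))) := by
  intro yc hyc
  have hFt : ∀ t, F t = fun w => -η t * ((U t + κ t • u (t - 1)) ⬝ᵥ w) + psiReg αt w :=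
    fun t => funext (hF t)
  have hGt : ∀ t, G t = fun w => -η t * (U t ⬝ᵥ w) + psiReg αt w := fun t => funext (hG t)
  exact (hasBregmanMinBound_psiReg (by omega) αt).oftrl_regret_le T u hu0 U hU κ η hηpos y z
    hyΩ hzΩ (fun t ht => hFt t ▸ isMinOn_iff.2 (hymin t ht))
    (fun t ht => hGt t ▸ isMinOn_iff.2 (hzmin t ht)) hyc

/-- OFTRL one-step inequality with time-varying step sizes.  With
`F_t(y) = −η_t⟨U^{(t)} + κ^{(t)} u^{(t−1)}, y⟩ + ψ(y)` and
`G_t(z) = −η_t⟨U^{(t)}, z⟩ + ψ(z)`, where `U^{(t)} = Σ_{τ<t} u^{(τ)}`, and minimizers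
`y^{(t)}, z^{(t)}` over `Ω`, the stated regret inequality holds for every `y ∈ Ω`. -/
theorem oftrl_one_step_inequality (d : ℕ) (hd : 2 ≤ d)
    (β : ℝ) (hβ : 70 ≤ β)
    (αt : ℝ) (hαt : αt = 2 + 2 * Real.log d + β * (Real.log d) ^ 2)
    (T : ℕ) (hT : 1 ≤ T)
    (u : ℕ → Fin d → ℝ) (hu0 : u 0 = 0)
    (U : ℕ → Fin d → ℝ) (hU : ∀ t, U t = ∑ τ ∈ Finset.Ico 1 t, u τ)
    (κ : ℕ → ℝ) (hκ : ∀ t, 0 < κ t)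
    (η : ℕ → ℝ) (hηpos : ∀ t ∈ Finset.Icc 1 (T + 1), 0 < η t)
    (hηmono : ∀ t ∈ Finset.Icc 1 T, η (t + 1) ≤ η t)
    (F G : ℕ → (Fin d → ℝ) → ℝ)
    (hF : ∀ t yy, F t yy =
      -η t * (∑ i, (U t i + κ t * u (t - 1) i) * yy i) + psiReg αt yy)
    (hG : ∀ t zz, G t zz = -η t * (∑ i, U t i * zz i) + psiReg αt zz)
    (y z : ℕ → Fin d → ℝ)
    (hyΩ : ∀ t ∈ Finset.Icc 1 (T + 1), y t ∈ liftedSimplex d)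
    (hzΩ : ∀ t ∈ Finset.Icc 1 (T + 1), z t ∈ liftedSimplex d)
    (hymin : ∀ t ∈ Finset.Icc 1 (T + 1), ∀ y' ∈ liftedSimplex d, F t (y t) ≤ F t y')
    (hzmin : ∀ t ∈ Finset.Icc 1 (T + 1), ∀ z' ∈ liftedSimplex d, G t (z t) ≤ G t z') :
    ∀ yc ∈ liftedSimplex d,
      (∑ t ∈ Finset.Icc 1 T, ∑ i, (yc i - y t i) * u t i) ≤
        psiReg αt yc / η (T + 1) - psiReg αt (y 1) / η 1
        + (∑ t ∈ Finset.Icc 1 T,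
            ∑ i, (z (t + 1) i - y t i) * (u t i - κ t * u (t - 1) i))
        - (∑ t ∈ Finset.Icc 1 T,
            (1 / η t) * (DPsi αt (y t) (z t) + DPsi αt (z (t + 1)) (y t)))
        + (∑ t ∈ Finset.Icc 1 T,
            (1 / η t - 1 / η (t + 1)) * psiReg αt (z (t + 1))) :=
  oftrl_one_step_inequality_general d hd αt T u hu0 U hU κ η hηpos F G hF hG y z hyΩ hzΩ hymin hzmin
end

section
/- Let H ≥ 1 be an integer, set α_t := (H+1)/(H+t) for t ≥ 1, and define α_t^t := α_t and α_t^j := α_j·∏_{k=j+1}^t (1 − α_k) for 1 ≤ j < t. Then for every t ≥ 1: Σ_{j=1}^t α_t^j·α_j² ≤ 3H/t. -/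
/-- Value-iteration step size `α_t = (H+1)/(H+t)`. -/
noncomputable def stepAlpha (H t : ℕ) : ℝ := ((H : ℝ) + 1) / ((H : ℝ) + t)

/-- Anytime-averaging weights `α_t^j = α_j ∏_{k=j+1}^t (1 − α_k)` (so `α_t^t = α_t`). -/
noncomputable def alphaW (H t j : ℕ) : ℝ :=
  stepAlpha H j * ∏ k ∈ Finset.Icc (j + 1) t, (1 - stepAlpha H k)

/-!
Writing `S_t = Σ_{j ≤ t} α_t^j α_j²`, the weights satisfy `α_{t+1}^j = (1 - α_{t+1}) α_t^j` for
`j ≤ t`, so `S_{t+1} = (1 - α_{t+1}) S_t + α_{t+1}³`, and the bound follows by induction on `t`.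
With `D = H + t + 1` the inductive step reduces to `(H+1)³ (t+1) ≤ 3 H² D²`, which holds because
`D² ≥ 4 H (t+1)` and `H + 1 ≤ 2 H`. The induction starts at `t = 0`, where both sides are `0`
(`3H/0 = 0` in Lean); that junk value is harmless, being multiplied by `1 - α_1 = 0`.
-/

open Finset

lemma alphaW_succ_of_le {H t j : ℕ} (hj : j ≤ t) :
    alphaW H (t + 1) j = (1 - stepAlpha H (t + 1)) * alphaW H t j := by
  rw [alphaW, alphaW, prod_Icc_succ_top (by omega)]
  ring

lemma alphaW_self (H t : ℕ) : alphaW H t t = stepAlpha H t := by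
  simp [alphaW]

lemma sum_alphaW_succ (H t : ℕ) (f : ℕ → ℝ) :
    ∑ j ∈ Icc 1 (t + 1), alphaW H (t + 1) j * f j =
      (1 - stepAlpha H (t + 1)) * ∑ j ∈ Icc 1 t, alphaW H t j * f j
        + stepAlpha H (t + 1) * f (t + 1) := by
  rw [sum_Icc_succ_top (by omega), alphaW_self, mul_sum]
  congr 1
  refine sum_congr rfl fun j hj => ?_
  rw [alphaW_succ_of_le (mem_Icc.mp hj).2, mul_assoc]

lemma stepAlpha_succ (H t : ℕ) : stepAlpha H (t + 1) = ((H : ℝ) + 1) / (H + t + 1) := by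
  rw [stepAlpha, Nat.cast_succ, ← add_assoc]

lemma one_sub_stepAlpha_succ (H t : ℕ) :
    1 - stepAlpha H (t + 1) = t / ((H : ℝ) + t + 1) := by
  rw [stepAlpha_succ, one_sub_div (by positivity)]
  ring_nf

lemma add_one_pow_three_mul_le {H m : ℝ} (hH : 1 ≤ H) (hm : 0 ≤ m) :
    (H + 1) ^ 3 * m ≤ 3 * H ^ 2 * (H + m) ^ 2 :=
  calc (H + 1) ^ 3 * m ≤ (2 * H) ^ 3 * m := by gcongr; linarith
    _ = 2 * H ^ 2 * (4 * H * m) := by ring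
    _ ≤ 3 * H ^ 2 * (H + m) ^ 2 := by
      gcongr
      · norm_num
      · nlinarith [sq_nonneg (H - m)]

lemma one_sub_stepAlpha_mul_add_pow_three_le {H : ℕ} (hH : 1 ≤ H) (t : ℕ) :
    (1 - stepAlpha H (t + 1)) * (3 * H / t) + stepAlpha H (t + 1) ^ 3 ≤ 3 * H / (t + 1 : ℕ) := by
  have hH' : (1 : ℝ) ≤ H := by exact_mod_cast hH
  have hD : (0 : ℝ) < H + t + 1 := by positivity
  have hdecay : (1 - stepAlpha H (t + 1)) * (3 * H / t) ≤ 3 * H / (H + t + 1) := by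
    rw [one_sub_stepAlpha_succ]
    rcases Nat.eq_zero_or_pos t with rfl | ht
    · simp only [CharP.cast_eq_zero, zero_div, zero_mul]
      positivity
    · rw [div_mul_div_comm, mul_comm (t : ℝ), mul_div_mul_right _ _ (by positivity)]
  have hcube : stepAlpha H (t + 1) ^ 3 ≤ 3 * H / (t + 1) - 3 * H / (H + t + 1) := by
    rw [stepAlpha_succ, div_sub_div _ _ (by positivity) hD.ne', div_pow,
      div_le_div_iff₀ (by positivity) (by positivity)]
    have := add_one_pow_three_mul_le hH' (by positivity : (0 : ℝ) ≤ t + 1)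
    nlinarith
  rw [Nat.cast_succ]
  linarith

theorem alphaW_sum_sq_bound_general (H : ℕ) (hH : 1 ≤ H) (t : ℕ) :
    (∑ j ∈ Finset.Icc 1 t, alphaW H t j * (stepAlpha H j) ^ 2) ≤ 3 * (H : ℝ) / t := by
  induction t with
  | zero => simp
  | succ t ih =>
    have hα : 0 ≤ 1 - stepAlpha H (t + 1) := by
      rw [one_sub_stepAlpha_succ]; positivity
    calc ∑ j ∈ Icc 1 (t + 1), alphaW H (t + 1) j * stepAlpha H j ^ 2
        = (1 - stepAlpha H (t + 1)) * ∑ j ∈ Icc 1 t, alphaW H t j * stepAlpha H j ^ 2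
            + stepAlpha H (t + 1) ^ 3 := by rw [sum_alphaW_succ]; ring
      _ ≤ (1 - stepAlpha H (t + 1)) * (3 * H / t) + stepAlpha H (t + 1) ^ 3 := by gcongr
      _ ≤ 3 * H / (t + 1 : ℕ) := one_sub_stepAlpha_mul_add_pow_three_le hH t

/-- `Σ_{j=1}^t α_t^j · α_j² ≤ 3H/t`. -/
theorem alphaW_sum_sq_bound (H : ℕ) (hH : 1 ≤ H) (t : ℕ) (ht : 1 ≤ t) :
    (∑ j ∈ Finset.Icc 1 t, alphaW H t j * (stepAlpha H j) ^ 2) ≤ 3 * (H : ℝ) / t :=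
  alphaW_sum_sq_bound_general H hH t
end
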